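/- Let Θ, Θ̃, 𝒳, 𝒴 be finite sets, π a pmf on Θ, λ(· | ν) a pmf on Θ̃ for each ν ∈ Θ, μ a pmf on 𝒳, and k(· | ν, x) a pmf on 𝒴. Let T ≥ 1 and suppose θ, θ̃, X_0, Y_1, …, X_{T−1}, Y_T have joint pmf π(ν) · λ(τ | ν) · ∏_{s=0}^{T−1} μ(x_s) · k(y_{s+1} | ν, x_s) (so the data pairs are i.i.d. given θ, the inputs are independent of θ, and θ̃ is conditionally independent of the data given θ). Then I( (X_{0:T−1}, Y_{1:T}) ; θ | θ̃ ) / T ≤ I( Y_1 ; θ | θ̃, X_0 ): the average distortion over the whole history is bounded by the single-sample distortion. -/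

import Mathlib

/-!
Write `D = (X, Y)` for the data, where `Y s` is the label of the input `X s` (the paper's
`Y_{s+1}`). Then `I(D; θ | θ̃) = H(D | θ̃) - H(D | θ, θ̃)`, and the chain rule splits both terms
into an input part and a label part. The inputs are independent of `(θ, θ̃)`, so the input parts
cancel and `I(D; θ | θ̃) = H(Y | X, θ̃) - H(Y | X, θ, θ̃)`. Given `(X, θ, θ̃)` the labels are
independent, so the second term is `T · H(Y_s | θ, θ̃, X_s)`. The first term is at most
`∑ₛ H(Y_s | θ̃, X_s)`: conditioning on less and subadditivity at once, by Gibbs' inequality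
against the product of the conditional laws of the `Y_s`. Finally every pair `(θ, θ̃, X_s, Y_s)`
has the same law, so all these single-sample terms agree with those for `s = 0`.
-/

open scoped Classical

noncomputable section

/-- Probability of the event `X = a` under the pmf `p` on a finite sample space. -/
def pr {Ω : Type*} [Fintype Ω] (p : Ω → ℝ) {A : Type*} (X : Ω → A) (a : A) : ℝ :=
  ∑ ω, if X ω = a then p ω else 0

/-- Shannon entropy of a random variable (in nats). -/
def entropy {Ω : Type*} [Fintype Ω] (p : Ω → ℝ) {A : Type*} [Fintype A] (X : Ω → A) : ℝ :=
  ∑ a, Real.negMulLog (pr p X a)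

/-- Conditional mutual information `I(X;Y|Z) = H(X,Z) + H(Y,Z) - H(X,Y,Z) - H(Z)` (in nats). -/
def condMutualInfo {Ω : Type*} [Fintype Ω] (p : Ω → ℝ) {A B C : Type*}
    [Fintype A] [Fintype B] [Fintype C] (X : Ω → A) (Y : Ω → B) (Z : Ω → C) : ℝ :=
  entropy p (fun ω => (X ω, Z ω)) + entropy p (fun ω => (Y ω, Z ω))
    - entropy p (fun ω => ((X ω, Y ω), Z ω)) - entropy p Z

section Distribution

variable {Ω : Type*} [Fintype Ω] (p : Ω → ℝ) {A B C : Type*}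

theorem pr_nonneg (hp0 : ∀ ω, 0 ≤ p ω) (X : Ω → A) (a : A) : 0 ≤ pr p X a :=
  Finset.sum_nonneg fun ω _ => by split <;> simp [hp0 ω]

theorem sum_pr (hp1 : ∑ ω, p ω = 1) [Fintype A] (X : Ω → A) : ∑ a, pr p X a = 1 := by
  simp only [pr]
  rw [Finset.sum_comm]
  simpa using hp1

theorem pr_comp [Fintype A] (V : Ω → A) (F : A → B) (b : B) :
    pr p (fun ω => F (V ω)) b = ∑ a, if F a = b then pr p V a else 0 := by
  simp only [pr, Finset.ite_sum_zero]
  rw [Finset.sum_comm]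
  refine Finset.sum_congr rfl fun ω _ => ?_
  rw [Finset.sum_eq_single (V ω)] <;> aesop

theorem pr_comp_congr {Ω' : Type*} [Fintype Ω'] {q : Ω' → ℝ} [Fintype A] {V : Ω → A}
    {V' : Ω' → A} (h : ∀ a, pr p V a = pr q V' a) (F : A → B) (b : B) :
    pr p (fun ω => F (V ω)) b = pr q (fun ω => F (V' ω)) b := by
  simp only [pr_comp, h]

theorem pr_comp_of_injective (V : Ω → A) {f : A → B} (hf : Function.Injective f) (a : A) :
    pr p (fun ω => f (V ω)) (f a) = pr p V a := by
  simp only [pr, hf.eq_iff]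

theorem pr_le_pr_comp (hp0 : ∀ ω, 0 ≤ p ω) (V : Ω → A) (F : A → B) (a : A) :
    pr p V a ≤ pr p (fun ω => F (V ω)) (F a) :=
  Finset.sum_le_sum fun ω _ => by split_ifs <;> simp_all

theorem pr_fst [Fintype B] (U : Ω → A) (V : Ω → B) (a : A) :
    pr p U a = ∑ b, pr p (fun ω => (U ω, V ω)) (a, b) := by
  simp only [pr]
  rw [Finset.sum_comm]
  refine Finset.sum_congr rfl fun ω _ => ?_
  rw [Finset.sum_eq_single (V ω)] <;> aesop

theorem pr_snd [Fintype A] (U : Ω → A) (V : Ω → B) (b : B) :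
    pr p V b = ∑ a, pr p (fun ω => (U ω, V ω)) (a, b) := by
  simp only [pr]
  rw [Finset.sum_comm]
  refine Finset.sum_congr rfl fun ω _ => ?_
  rw [Finset.sum_eq_single (U ω)] <;> aesop

theorem sum_pr_comp_mul [Fintype A] [Fintype B] (V : Ω → A) (F : A → B) (φ : B → ℝ) :
    ∑ b, pr p (fun ω => F (V ω)) b * φ b = ∑ a, pr p V a * φ (F a) := by
  simp only [pr_comp p V F, Finset.sum_mul, ite_mul, zero_mul]
  rw [Finset.sum_comm]
  simp

theorem entropy_eq_neg_sum_mul_log [Fintype A] (X : Ω → A) :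
    entropy p X = -∑ a, pr p X a * Real.log (pr p X a) := by
  simp [entropy, Real.negMulLog, Finset.sum_neg_distrib]

theorem entropy_comp_eq_neg_sum_mul_log [Fintype A] [Fintype B] (V : Ω → A) (F : A → B) :
    entropy p (fun ω => F (V ω))
      = -∑ a, pr p V a * Real.log (pr p (fun ω => F (V ω)) (F a)) := by
  rw [entropy_eq_neg_sum_mul_log, sum_pr_comp_mul]

theorem entropy_comp_of_injective [Fintype A] [Fintype B] (V : Ω → A) {f : A → B}
    (hf : Function.Injective f) : entropy p (fun ω => f (V ω)) = entropy p V := by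
  simp only [entropy_comp_eq_neg_sum_mul_log, pr_comp_of_injective p V hf,
    ← entropy_eq_neg_sum_mul_log]

theorem entropy_congr {Ω' : Type*} [Fintype Ω'] {q : Ω' → ℝ} [Fintype A] {X : Ω → A}
    {X' : Ω' → A} (h : ∀ a, pr p X a = pr q X' a) : entropy p X = entropy q X' :=
  Finset.sum_congr rfl fun a _ => by rw [h a]

end Distribution

def condEntropy {Ω : Type*} [Fintype Ω] (p : Ω → ℝ) {B C : Type*} [Fintype B] [Fintype C]
    (Y : Ω → B) (Z : Ω → C) : ℝ :=
  entropy p (fun ω => (Y ω, Z ω)) - entropy p Z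

def condPr {Ω : Type*} [Fintype Ω] (p : Ω → ℝ) {B C : Type*} (Y : Ω → B) (Z : Ω → C)
    (b : B) (c : C) : ℝ :=
  pr p (fun ω => (Y ω, Z ω)) (b, c) / pr p Z c

def IndepPr {Ω : Type*} [Fintype Ω] (p : Ω → ℝ) {A B : Type*} (U : Ω → A) (V : Ω → B) :
    Prop :=
  ∀ a b, pr p (fun ω => (U ω, V ω)) (a, b) = pr p U a * pr p V b

section ConditionalEntropy

variable {Ω : Type*} [Fintype Ω] (p : Ω → ℝ) {A B C : Type*} [Fintype A] [Fintype B]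
  [Fintype C]

theorem condEntropy_congr {Ω' : Type*} [Fintype Ω'] {q : Ω' → ℝ} {Y : Ω → B} {Z : Ω → C}
    {Y' : Ω' → B} {Z' : Ω' → C}
    (h : ∀ b c, pr p (fun ω => (Y ω, Z ω)) (b, c) = pr q (fun ω => (Y' ω, Z' ω)) (b, c)) :
    condEntropy p Y Z = condEntropy q Y' Z' := by
  have hZ : ∀ c, pr p Z c = pr q Z' c := fun c => by
    rw [pr_snd p Y Z, pr_snd q Y' Z']
    simp only [h]
  rw [condEntropy, condEntropy, entropy_congr p (fun z => h z.1 z.2), entropy_congr p hZ]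

theorem condEntropy_eq_sum_of_pr_eq_mul (Y : Ω → B) (W : Ω → C) (ρ : C → ℝ) (r : C → B → ℝ)
    (hr1 : ∀ c, ∑ b, r c b = 1) (h : ∀ b c, pr p (fun ω => (Y ω, W ω)) (b, c) = ρ c * r c b) :
    condEntropy p Y W = ∑ c, ρ c * ∑ b, Real.negMulLog (r c b) := by
  have hW : ∀ c, pr p W c = ρ c := fun c => by
    rw [pr_snd p Y W]
    simp only [h]
    rw [← Finset.mul_sum, hr1, mul_one]
  rw [condEntropy, entropy, Fintype.sum_prod_type, Finset.sum_comm, sub_eq_iff_eq_add']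
  simp only [h, Real.negMulLog_mul, Finset.sum_add_distrib, ← Finset.sum_mul, hr1, one_mul,
    ← Finset.mul_sum, entropy, hW]

theorem condEntropy_pair (U : Ω → A) (V : Ω → B) (W : Ω → C) :
    condEntropy p (fun ω => (U ω, V ω)) W
      = condEntropy p U W + condEntropy p V (fun ω => (U ω, W ω)) := by
  have hswap : entropy p (fun ω => (V ω, (U ω, W ω))) = entropy p (fun ω => ((U ω, V ω), W ω)) :=
    entropy_comp_of_injective p (fun ω => ((U ω, V ω), W ω)) (f := fun z => (z.1.2, (z.1.1, z.2)))
      (by rintro ⟨⟨_, _⟩, _⟩ ⟨⟨_, _⟩, _⟩ h; simp_all)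
  simp only [condEntropy, hswap]
  ring

theorem condMutualInfo_eq_condEntropy_sub (X : Ω → A) (Y : Ω → B) (Z : Ω → C) :
    condMutualInfo p X Y Z = condEntropy p X Z - condEntropy p X (fun ω => (Y ω, Z ω)) := by
  have hassoc : entropy p (fun ω => (X ω, (Y ω, Z ω))) = entropy p (fun ω => ((X ω, Y ω), Z ω)) :=
    entropy_comp_of_injective p (fun ω => ((X ω, Y ω), Z ω)) (f := fun z => (z.1.1, (z.1.2, z.2)))
      (by rintro ⟨⟨_, _⟩, _⟩ ⟨⟨_, _⟩, _⟩ h; simp_all)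
  simp only [condMutualInfo, condEntropy, hassoc]
  ring

theorem indepPr_of_pr_eq_mul {U : Ω → A} {V : Ω → B} (g : A → ℝ) (h : B → ℝ)
    (hg : ∑ a, g a = 1) (hh : ∑ b, h b = 1)
    (hfac : ∀ a b, pr p (fun ω => (U ω, V ω)) (a, b) = g a * h b) : IndepPr p U V := by
  have hU : ∀ a, pr p U a = g a := fun a => by
    rw [pr_fst p U V]
    simp only [hfac, ← Finset.mul_sum, hh, mul_one]
  have hV : ∀ b, pr p V b = h b := fun b => by
    rw [pr_snd p U V]
    simp only [hfac, ← Finset.sum_mul, hg, one_mul]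
  intro a b
  rw [hfac, hU, hV]

theorem IndepPr.comp_right {U : Ω → A} {V : Ω → B} (hUV : IndepPr p U V) {D : Type*}
    (f : B → D) : IndepPr p U (fun ω => f (V ω)) := by
  intro a d
  rw [pr_comp p (fun ω => (U ω, V ω)) (fun z => (z.1, f z.2)), pr_comp p V f]
  simp [Fintype.sum_prod_type, ite_and, hUV a, Finset.mul_sum]

theorem IndepPr.condEntropy_eq (hp1 : ∑ ω, p ω = 1) {U : Ω → A} {V : Ω → B}
    (hUV : IndepPr p U V) : condEntropy p U V = entropy p U := by
  rw [condEntropy_eq_sum_of_pr_eq_mul p U V (pr p V) (fun _ => pr p U) (fun _ => sum_pr p hp1 U)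
    (fun a b => by rw [hUV, mul_comm]), ← Finset.sum_mul, sum_pr p hp1 V, one_mul, entropy]

end ConditionalEntropy

theorem sum_mul_log_le_sum_mul_log_self {I : Type*} [Fintype I] (P Q : I → ℝ)
    (hP0 : ∀ i, 0 ≤ P i) (hQ0 : ∀ i, 0 ≤ Q i) (hsum : ∑ i, Q i ≤ ∑ i, P i)
    (hsupp : ∀ i, 0 < P i → 0 < Q i) :
    ∑ i, P i * Real.log (Q i) ≤ ∑ i, P i * Real.log (P i) := by
  have hterm : ∀ i, P i * Real.log (Q i) - P i * Real.log (P i) ≤ Q i - P i := by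
    intro i
    rcases (hP0 i).eq_or_lt with hPi | hPi
    · simp [← hPi, hQ0 i]
    · have hQi := hsupp i hPi
      calc P i * Real.log (Q i) - P i * Real.log (P i)
          = P i * Real.log (Q i / P i) := by rw [Real.log_div hQi.ne' hPi.ne']; ring
        _ ≤ P i * (Q i / P i - 1) :=
          mul_le_mul_of_nonneg_left (Real.log_le_sub_one_of_pos (div_pos hQi hPi)) hPi.le
        _ = Q i - P i := by field_simp
  have htotal := Finset.sum_le_sum fun i (_ : i ∈ Finset.univ) => hterm i
  simp only [Finset.sum_sub_distrib] at htotal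
  linarith

section CondPr

variable {Ω : Type*} [Fintype Ω] (p : Ω → ℝ) {A B C : Type*}

theorem condPr_nonneg (hp0 : ∀ ω, 0 ≤ p ω) (Y : Ω → B) (Z : Ω → C) (b : B) (c : C) :
    0 ≤ condPr p Y Z b c :=
  div_nonneg (pr_nonneg p hp0 _ _) (pr_nonneg p hp0 _ _)

theorem condPr_comp_pos (hp0 : ∀ ω, 0 ≤ p ω) (V : Ω → A) (F : A → B) (G : A → C) {a : A}
    (ha : 0 < pr p V a) :
    0 < condPr p (fun ω => F (V ω)) (fun ω => G (V ω)) (F a) (G a) :=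
  div_pos (ha.trans_le (pr_le_pr_comp p hp0 V (fun a => (F a, G a)) a))
    (ha.trans_le (pr_le_pr_comp p hp0 V G a))

theorem sum_condPr_le_one [Fintype B] (Y : Ω → B) (Z : Ω → C) (c : C) :
    ∑ b, condPr p Y Z b c ≤ 1 := by
  simp only [condPr]
  rw [← Finset.sum_div, ← pr_snd]
  exact div_self_le_one _

end CondPr

section Subadditivity

variable {Ω : Type*} [Fintype Ω] (p : Ω → ℝ) {A B C : Type*} [Fintype A] [Fintype B]
  [Fintype C]

theorem entropy_le_neg_sum_mul_log (hp0 : ∀ ω, 0 ≤ p ω) (hp1 : ∑ ω, p ω = 1) (V : Ω → A)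
    (Q : A → ℝ) (hQ0 : ∀ a, 0 ≤ Q a) (hQ1 : ∑ a, Q a ≤ 1)
    (hsupp : ∀ a, 0 < pr p V a → 0 < Q a) :
    entropy p V ≤ -∑ a, pr p V a * Real.log (Q a) := by
  rw [entropy_eq_neg_sum_mul_log, neg_le_neg_iff]
  exact sum_mul_log_le_sum_mul_log_self _ Q (pr_nonneg p hp0 V) hQ0
    (hQ1.trans_eq (sum_pr p hp1 V).symm) hsupp

theorem condEntropy_comp_eq_neg_sum_mul_log_condPr (hp0 : ∀ ω, 0 ≤ p ω) (V : Ω → A) (F : A → B)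
    (G : A → C) :
    condEntropy p (fun ω => F (V ω)) (fun ω => G (V ω))
      = -∑ a, pr p V a * Real.log (condPr p (fun ω => F (V ω)) (fun ω => G (V ω)) (F a) (G a)) := by
  have hterm : ∀ a, pr p V a
        * Real.log (condPr p (fun ω => F (V ω)) (fun ω => G (V ω)) (F a) (G a))
      = pr p V a * Real.log (pr p (fun ω => (F (V ω), G (V ω))) (F a, G a))
        - pr p V a * Real.log (pr p (fun ω => G (V ω)) (G a)) := by
    intro a
    rcases (pr_nonneg p hp0 V a).eq_or_lt with ha | ha
    · simp [← ha]
    · rw [condPr, Real.log_div (ha.trans_le (pr_le_pr_comp p hp0 V (fun a => (F a, G a)) a)).ne'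
        (ha.trans_le (pr_le_pr_comp p hp0 V G a)).ne']
      ring
  rw [Finset.sum_congr rfl fun a _ => hterm a, Finset.sum_sub_distrib, condEntropy,
    entropy_comp_eq_neg_sum_mul_log p V (fun a => (F a, G a)),
    entropy_comp_eq_neg_sum_mul_log p V G]
  ring

theorem sum_pr_mul_prod_condPr_le_one (hp0 : ∀ ω, 0 ≤ p ω) (hp1 : ∑ ω, p ω = 1) {ι : Type*}
    [Fintype ι] [DecidableEq ι] (Y : ι → Ω → B) (W : Ω → C) {D : Type*} (g : ι → C → D) :
    ∑ z : (ι → B) × C,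
      pr p W z.2 * ∏ i, condPr p (Y i) (fun ω => g i (W ω)) (z.1 i) (g i z.2) ≤ 1 := calc
  _ = ∑ c, pr p W c * ∏ i, ∑ b, condPr p (Y i) (fun ω => g i (W ω)) b (g i c) := by
      rw [Fintype.sum_prod_type_right]
      simp only [← Finset.mul_sum, Fintype.prod_sum]
  _ ≤ ∑ c, pr p W c * 1 := Finset.sum_le_sum fun c _ =>
      mul_le_mul_of_nonneg_left (Finset.prod_le_one
        (fun i _ => Finset.sum_nonneg fun b _ => condPr_nonneg p hp0 _ _ _ _)
        (fun i _ => sum_condPr_le_one p _ _ _)) (pr_nonneg p hp0 W c)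
  _ = 1 := by simp [sum_pr p hp1 W]

theorem condEntropy_pi_le_sum (hp0 : ∀ ω, 0 ≤ p ω) (hp1 : ∑ ω, p ω = 1) {ι : Type*}
    [Fintype ι] [DecidableEq ι] (Y : ι → Ω → B) (W : Ω → C) {D : Type*} [Fintype D]
    (g : ι → C → D) :
    condEntropy p (fun ω i => Y i ω) W ≤ ∑ i, condEntropy p (Y i) (fun ω => g i (W ω)) := by
  set V : Ω → (ι → B) × C := fun ω => (fun i => Y i ω, W ω)
  set Q : (ι → B) × C → ℝ := fun z =>
    pr p W z.2 * ∏ i, condPr p (Y i) (fun ω => g i (W ω)) (z.1 i) (g i z.2) with hQ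
  have hQ0 : ∀ z, 0 ≤ Q z := fun z =>
    mul_nonneg (pr_nonneg p hp0 W _) (Finset.prod_nonneg fun i _ => condPr_nonneg p hp0 _ _ _ _)
  have hQ1 : ∑ z, Q z ≤ 1 := sum_pr_mul_prod_condPr_le_one p hp0 hp1 Y W g
  have hpos : ∀ z, 0 < pr p V z →
      0 < pr p W z.2 ∧ ∀ i, 0 < condPr p (Y i) (fun ω => g i (W ω)) (z.1 i) (g i z.2) :=
    fun z hz => ⟨hz.trans_le (pr_le_pr_comp p hp0 V Prod.snd z),
      fun i => condPr_comp_pos p hp0 V (fun z => z.1 i) (fun z => g i z.2) hz⟩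
  have hterm : ∀ z, pr p V z * Real.log (Q z) = pr p V z * Real.log (pr p W z.2)
      + ∑ i, pr p V z * Real.log (condPr p (Y i) (fun ω => g i (W ω)) (z.1 i) (g i z.2)) := by
    intro z
    rcases (pr_nonneg p hp0 V z).eq_or_lt with hz | hz
    · simp [← hz]
    · obtain ⟨hW, hY⟩ := hpos z hz
      rw [hQ, Real.log_mul hW.ne' (Finset.prod_pos fun i _ => hY i).ne',
        Real.log_prod fun i _ => (hY i).ne', mul_add, Finset.mul_sum]
  have hW : entropy p W = -∑ z, pr p V z * Real.log (pr p W z.2) :=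
    entropy_comp_eq_neg_sum_mul_log p V Prod.snd
  have hY : ∀ i, condEntropy p (Y i) (fun ω => g i (W ω))
      = -∑ z, pr p V z * Real.log (condPr p (Y i) (fun ω => g i (W ω)) (z.1 i) (g i z.2)) :=
    fun i => condEntropy_comp_eq_neg_sum_mul_log_condPr p hp0 V (fun z => z.1 i) (fun z => g i z.2)
  have hH := entropy_le_neg_sum_mul_log p hp0 hp1 V Q hQ0 hQ1 fun z hz =>
    mul_pos (hpos z hz).1 (Finset.prod_pos fun i _ => (hpos z hz).2 i)
  rw [Finset.sum_congr rfl fun z _ => hterm z, Finset.sum_add_distrib, Finset.sum_comm] at hH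
  rw [condEntropy, hW, Finset.sum_congr rfl fun i _ => hY i, Finset.sum_neg_distrib]
  linarith

end Subadditivity

section ProductSums

variable {ι κ : Type*} [Fintype ι] [DecidableEq ι] [Fintype κ] (f : ι → κ → ℝ)

theorem sum_pi_prod_eq_one (hf : ∀ i, ∑ c, f i c = 1) : ∑ x : ι → κ, ∏ i, f i (x i) = 1 := by
  simp [← Fintype.prod_sum, hf]

theorem sum_pi_mul_prod (hf : ∀ i, ∑ c, f i c = 1) (i : ι) (φ : κ → ℝ) :
    ∑ x : ι → κ, φ (x i) * ∏ j, f j (x j) = ∑ c, φ c * f i c := by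
  have hx : ∀ x : ι → κ,
      φ (x i) * ∏ j, f j (x j) = ∏ j, (if j = i then φ (x j) else 1) * f j (x j) := fun x => by
    rw [Finset.prod_mul_distrib, Finset.prod_ite_eq']
    simp
  rw [Finset.sum_congr rfl fun x _ => hx x,
    ← Fintype.prod_sum fun j c => (if j = i then φ c else 1) * f j c,
    Finset.prod_eq_single i (fun j _ hj => by simp [hj, hf]) (by simp)]
  simp

theorem sum_pi_ite_mul_prod (hf : ∀ i, ∑ c, f i c = 1) (i : ι) (c : κ) (C : ℝ) :
    ∑ x : ι → κ, (if x i = c then C * ∏ j, f j (x j) else 0) = C * f i c := by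
  simpa [ite_mul] using sum_pi_mul_prod f hf i fun c' => if c' = c then C else 0

theorem sum_pi_sum_mul_prod (hf : ∀ i, ∑ c, f i c = 1) (φ : ι → κ → ℝ) :
    ∑ x : ι → κ, (∑ i, φ i (x i)) * ∏ j, f j (x j) = ∑ i, ∑ c, φ i c * f i c := by
  simp only [Finset.sum_mul]
  rw [Finset.sum_comm]
  exact Finset.sum_congr rfl fun i _ => sum_pi_mul_prod f hf i (φ i)

theorem sum_pi_negMulLog_prod (hf : ∀ i, ∑ c, f i c = 1) :
    ∑ x : ι → κ, Real.negMulLog (∏ i, f i (x i)) = ∑ i, ∑ c, Real.negMulLog (f i c) := by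
  have hx : ∀ x : ι → κ, Real.negMulLog (∏ i, f i (x i))
      = (∑ i, -Real.log (f i (x i))) * ∏ j, f j (x j) := fun x => by
    by_cases h0 : ∏ i, f i (x i) = 0
    · simp [h0]
    · rw [Real.negMulLog,
        Real.log_prod fun i _ hi => h0 (Finset.prod_eq_zero_iff.2 ⟨i, by simp, hi⟩)]
      simp only [Finset.sum_neg_distrib]
      ring
  rw [Finset.sum_congr rfl fun x _ => hx x, sum_pi_sum_mul_prod f hf fun i c => -Real.log (f i c)]
  simp only [Real.negMulLog, neg_mul, mul_neg, mul_comm]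

end ProductSums

def HasIidJointLaw {Ω Θ Θ' 𝒳 𝒴 : Type*} [Fintype Ω] {T : ℕ} (p : Ω → ℝ) (θ : Ω → Θ)
    (θt : Ω → Θ') (X : Fin T → Ω → 𝒳) (Y : Fin T → Ω → 𝒴) (π : Θ → ℝ) (lam : Θ → Θ' → ℝ)
    (μ : 𝒳 → ℝ) (k : 𝒴 → Θ → 𝒳 → ℝ) : Prop :=
  ∀ ν τ x y, pr p (fun ω => (θ ω, θt ω, fun s => X s ω, fun s => Y s ω)) (ν, τ, x, y)
    = π ν * lam ν τ * ∏ s, μ (x s) * k (y s) ν (x s)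

section IidModel

variable {Ω Θ Θ' 𝒳 𝒴 : Type*} [Fintype Ω] [Fintype Θ] [Fintype Θ'] [Fintype 𝒳] [Fintype 𝒴]
  {T : ℕ} {π : Θ → ℝ} {lam : Θ → Θ' → ℝ} {μ : 𝒳 → ℝ} {k : 𝒴 → Θ → 𝒳 → ℝ} {p : Ω → ℝ}
  {θ : Ω → Θ} {θt : Ω → Θ'} {X : Fin T → Ω → 𝒳} {Y : Fin T → Ω → 𝒴}

theorem pr_inputs_params (hk1 : ∀ ν a, ∑ b, k b ν a = 1)
    (hjoint : HasIidJointLaw p θ θt X Y π lam μ k)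
    (x : Fin T → 𝒳) (ν : Θ) (τ : Θ') :
    pr p (fun ω => ((fun s => X s ω), (θ ω, θt ω))) (x, (ν, τ))
      = (∏ s, μ (x s)) * (π ν * lam ν τ) := by
  refine (pr_comp p (fun ω => (θ ω, θt ω, fun s => X s ω, fun s => Y s ω))
    (fun z => (z.2.2.1, (z.1, z.2.1))) _).trans ?_
  simp only [Fintype.sum_prod_type, Prod.mk.injEq, ite_and, hjoint _ _ _ _,
    Finset.prod_mul_distrib, Finset.sum_ite_irrel, Finset.sum_const_zero, Finset.sum_ite_eq',
    Finset.mem_univ, if_true, ← Finset.mul_sum]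
  rw [sum_pi_prod_eq_one (fun s c => k c ν (x s)) fun s => hk1 ν (x s)]
  ring

theorem pr_sample (hμ1 : ∑ a, μ a = 1) (hk1 : ∀ ν a, ∑ b, k b ν a = 1)
    (hjoint : HasIidJointLaw p θ θt X Y π lam μ k)
    (s : Fin T) (ν : Θ) (τ : Θ') (a : 𝒳) (b : 𝒴) :
    pr p (fun ω => (θ ω, θt ω, X s ω, Y s ω)) (ν, τ, a, b) = π ν * lam ν τ * (μ a * k b ν a) := by
  refine (pr_comp p (fun ω => (θ ω, θt ω, fun s => X s ω, fun s => Y s ω))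
    (fun z => (z.1, z.2.1, z.2.2.1 s, z.2.2.2 s)) _).trans ?_
  simp only [Fintype.sum_prod_type, Prod.mk.injEq, ite_and, hjoint _ _ _ _,
    Finset.prod_mul_distrib, Finset.sum_ite_irrel, Finset.sum_const_zero, Finset.sum_ite_eq',
    Finset.mem_univ, if_true]
  have hy : ∀ x : Fin T → 𝒳, ∑ y : Fin T → 𝒴, (if y s = b then
        π ν * lam ν τ * ((∏ j, μ (x j)) * ∏ j, k (y j) ν (x j)) else 0)
      = π ν * lam ν τ * (∏ j, μ (x j)) * k b ν (x s) := fun x => by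
    rw [← sum_pi_ite_mul_prod (fun j c => k c ν (x j)) (fun j => hk1 ν (x j)) s b]
    simp only [mul_assoc]
  have hx : ∀ x : Fin T → 𝒳, (if x s = a then π ν * lam ν τ * (∏ j, μ (x j)) * k b ν (x s) else 0)
      = if x s = a then π ν * lam ν τ * k b ν a * ∏ j, μ (x j) else 0 := fun x => by
    split_ifs with h
    · rw [h]; ring
    · rfl
  simp only [hy, hx, sum_pi_ite_mul_prod (fun _ => μ) (fun _ => hμ1)]
  ring

theorem indepPr_inputs_params (hπ1 : ∑ ν, π ν = 1) (hlam1 : ∀ ν, ∑ τ, lam ν τ = 1)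
    (hμ1 : ∑ a, μ a = 1) (hk1 : ∀ ν a, ∑ b, k b ν a = 1)
    (hjoint : HasIidJointLaw p θ θt X Y π lam μ k) :
    IndepPr p (fun ω s => X s ω) (fun ω => (θ ω, θt ω)) :=
  indepPr_of_pr_eq_mul p (fun x => ∏ s, μ (x s)) (fun u => π u.1 * lam u.1 u.2)
    (sum_pi_prod_eq_one (fun _ => μ) fun _ => hμ1)
    (by simp [Fintype.sum_prod_type, ← Finset.mul_sum, hlam1, hπ1])
    (fun x u => pr_inputs_params hk1 hjoint x u.1 u.2)

theorem condEntropy_labels_inputs_params (hμ1 : ∑ a, μ a = 1) (hk1 : ∀ ν a, ∑ b, k b ν a = 1)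
    (hjoint : HasIidJointLaw p θ θt X Y π lam μ k) :
    condEntropy p (fun ω s => Y s ω) (fun ω => ((fun s => X s ω), (θ ω, θt ω)))
      = T * ∑ u : Θ × Θ', π u.1 * lam u.1 u.2 * ∑ a, μ a * ∑ b, Real.negMulLog (k b u.1 a) := by
  rw [condEntropy_eq_sum_of_pr_eq_mul p _ _
    (fun w => (∏ s, μ (w.1 s)) * (π w.2.1 * lam w.2.1 w.2.2))
    (fun w y => ∏ s, k (y s) w.2.1 (w.1 s))
    (fun w => sum_pi_prod_eq_one (fun s b => k b w.2.1 (w.1 s)) fun s => hk1 _ _)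
    fun y w => ?_]
  swap
  · refine (pr_comp_of_injective p (fun ω => (θ ω, θt ω, fun s => X s ω, fun s => Y s ω))
      (f := fun z => (z.2.2.2, (z.2.2.1, (z.1, z.2.1))))
      (by rintro ⟨_, _, _, _⟩ ⟨_, _, _, _⟩ h; simp_all) (w.2.1, w.2.2, w.1, y)).trans ?_
    rw [hjoint, Finset.prod_mul_distrib]
    ring
  simp only [sum_pi_negMulLog_prod _ fun s => hk1 _ _]
  rw [Fintype.sum_prod_type, Finset.sum_comm, Finset.mul_sum]
  refine Finset.sum_congr rfl fun u _ => ?_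
  have hiid := sum_pi_sum_mul_prod (fun _ : Fin T => μ) (fun _ => hμ1)
    fun _ a => ∑ b, Real.negMulLog (k b u.1 a)
  simp only [Finset.sum_const, Finset.card_univ, Fintype.card_fin, nsmul_eq_mul] at hiid
  calc ∑ x : Fin T → 𝒳, (∏ s, μ (x s)) * (π u.1 * lam u.1 u.2)
        * ∑ s, ∑ b, Real.negMulLog (k b u.1 (x s))
      = π u.1 * lam u.1 u.2 * ∑ x : Fin T → 𝒳,
          (∑ s, ∑ b, Real.negMulLog (k b u.1 (x s))) * ∏ s, μ (x s) := by
        rw [Finset.mul_sum]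
        exact Finset.sum_congr rfl fun x _ => by ring
    _ = T * (π u.1 * lam u.1 u.2 * ∑ a, μ a * ∑ b, Real.negMulLog (k b u.1 a)) := by
        rw [hiid]
        simp only [mul_comm (μ _)]
        ring

theorem condEntropy_sample (hμ1 : ∑ a, μ a = 1) (hk1 : ∀ ν a, ∑ b, k b ν a = 1)
    (hjoint : HasIidJointLaw p θ θt X Y π lam μ k) (s : Fin T) :
    condEntropy p (Y s) (fun ω => (θ ω, θt ω, X s ω))
      = ∑ u : Θ × Θ', π u.1 * lam u.1 u.2 * ∑ a, μ a * ∑ b, Real.negMulLog (k b u.1 a) := by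
  rw [condEntropy_eq_sum_of_pr_eq_mul p _ _ (fun w => π w.1 * lam w.1 w.2.1 * μ w.2.2)
    (fun w b => k b w.1 w.2.2) (fun w => hk1 _ _) fun b w => ?_]
  · simp only [Fintype.sum_prod_type, Finset.mul_sum, mul_assoc]
  · refine (pr_comp_of_injective p (fun ω => (θ ω, θt ω, X s ω, Y s ω))
      (f := fun z => (z.2.2.2, (z.1, z.2.1, z.2.2.1)))
      (by rintro ⟨_, _, _, _⟩ ⟨_, _, _, _⟩ h; simp_all) (w.1, w.2.1, w.2.2, b)).trans ?_
    rw [pr_sample hμ1 hk1 hjoint]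
    ring

theorem condEntropy_sample_eq (hμ1 : ∑ a, μ a = 1) (hk1 : ∀ ν a, ∑ b, k b ν a = 1)
    (hjoint : HasIidJointLaw p θ θt X Y π lam μ k) (s t : Fin T) :
    condEntropy p (Y s) (fun ω => (θt ω, X s ω)) = condEntropy p (Y t) (fun ω => (θt ω, X t ω)) :=
  condEntropy_congr p fun b c => pr_comp_congr p
    (V := fun ω => (θ ω, θt ω, X s ω, Y s ω)) (V' := fun ω => (θ ω, θt ω, X t ω, Y t ω))
    (fun z => by rw [pr_sample hμ1 hk1 hjoint, pr_sample hμ1 hk1 hjoint])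
    (fun z => (z.2.2.2, (z.2.1, z.2.2.1))) (b, c)

end IidModel

/-- average distortion is bounded by single-sample distortion. -/
theorem statement8 {Ω Θ Θ' 𝒳 𝒴 : Type*}
    [Fintype Ω] [Fintype Θ] [Fintype Θ'] [Fintype 𝒳] [Fintype 𝒴]
    (T : ℕ) (hT : 1 ≤ T)
    (π : Θ → ℝ) (hπ : (∀ ν, 0 ≤ π ν) ∧ ∑ ν, π ν = 1)
    (lam : Θ → Θ' → ℝ) (hlam : ∀ ν, (∀ τ, 0 ≤ lam ν τ) ∧ ∑ τ, lam ν τ = 1)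
    (μ : 𝒳 → ℝ) (hμ : (∀ a, 0 ≤ μ a) ∧ ∑ a, μ a = 1)
    (k : 𝒴 → Θ → 𝒳 → ℝ) (hk : ∀ ν a, (∀ b, 0 ≤ k b ν a) ∧ ∑ b, k b ν a = 1)
    (p : Ω → ℝ) (hp0 : ∀ ω, 0 ≤ p ω) (hp1 : ∑ ω, p ω = 1)
    (θ : Ω → Θ) (θt : Ω → Θ') (X : Fin T → Ω → 𝒳) (Y : Fin T → Ω → 𝒴)
    (hjoint : ∀ (ν : Θ) (τ : Θ') (x : Fin T → 𝒳) (y : Fin T → 𝒴),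
      pr p (fun ω => (θ ω, θt ω, fun s => X s ω, fun s => Y s ω)) (ν, τ, x, y)
        = π ν * lam ν τ * ∏ s : Fin T, μ (x s) * k (y s) ν (x s)) :
    condMutualInfo p (fun ω => ((fun s : Fin T => X s ω), (fun s : Fin T => Y s ω))) θ θt
        / (T : ℝ)
      ≤ condMutualInfo p (Y ⟨0, by omega⟩) θ (fun ω => (θt ω, X ⟨0, by omega⟩ ω)) := by
  set s₀ : Fin T := ⟨0, by omega⟩
  have hk1 : ∀ ν a, ∑ b, k b ν a = 1 := fun ν a => (hk ν a).2
  have hindep := indepPr_inputs_params hπ.2 (fun ν => (hlam ν).2) hμ.2 hk1 hjoint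
  have hX : condEntropy p (fun ω s => X s ω) θt = entropy p (fun ω s => X s ω) :=
    (hindep.comp_right p Prod.snd).condEntropy_eq p hp1
  have hsub := condEntropy_pi_le_sum p hp0 hp1 Y (fun ω => ((fun s => X s ω), θt ω))
    fun s w => (w.2, w.1 s)
  simp only [condEntropy_sample_eq hμ.2 hk1 hjoint _ s₀, Finset.sum_const, Finset.card_univ,
    Fintype.card_fin, nsmul_eq_mul] at hsub
  rw [condMutualInfo_eq_condEntropy_sub, condEntropy_pair, condEntropy_pair, hX,
    hindep.condEntropy_eq p hp1, condEntropy_labels_inputs_params hμ.2 hk1 hjoint,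
    condMutualInfo_eq_condEntropy_sub, condEntropy_sample hμ.2 hk1 hjoint,
    div_le_iff₀ (by exact_mod_cast hT)]
  linarith

end
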